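/- arXiv:1409.2001 — 2 statements merged into one kernel-verified Lean document; each statement's English description precedes it below -/
import Mathlib

section
/- Two edge-parallel planar quadrilaterals (s_i, s_j, s_k, s_l) and (s*_i, s*_j, s*_k, s*_l) in a real vector space satisfy δs_{ik} ∧ δs*_{jl} = δs*_{ik} ∧ δs_{jl}, where δs_{ik} = s_k − s_i and δs_{jl} = s_l − s_j denote the diagonals and ∧ is the wedge (exterior) product. -/
/-- The wedge product `v ∧ w`, valued in the exterior algebra `Λ V`. -/
noncomputable def wedge {V : Type*} [AddCommGroup V] [Module ℝ V] (v w : V) :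
    ExteriorAlgebra ℝ V :=
  ExteriorAlgebra.ι ℝ v * ExteriorAlgebra.ι ℝ w

/-- A quadrilateral `s : Fin 4 → V` is planar: all its vertices lie in a common
affine plane. -/
def Planar {V : Type*} [AddCommGroup V] [Module ℝ V] (s : Fin 4 → V) : Prop :=
  ∃ w₁ w₂ : V, ∀ a b : Fin 4, s b - s a ∈ Submodule.span ℝ ({w₁, w₂} : Set V)

/-- Two quadrilaterals are edge-parallel: corresponding edges have vanishing
wedge product. -/
def EdgeParallel {V : Type*} [AddCommGroup V] [Module ℝ V] (s t : Fin 4 → V) : Prop :=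
  wedge (s 1 - s 0) (t 1 - t 0) = 0 ∧ wedge (s 2 - s 1) (t 2 - t 1) = 0 ∧
  wedge (s 3 - s 2) (t 3 - t 2) = 0 ∧ wedge (s 0 - s 3) (t 0 - t 3) = 0

/-- Two edge-parallel planar quadrilaterals satisfy
`δs_{ik} ∧ δs*_{jl} = δs*_{ik} ∧ δs_{jl}`. -/
theorem stmt0 {V : Type*} [AddCommGroup V] [Module ℝ V] (s t : Fin 4 → V)
    (hs : Planar s) (ht : Planar t) (h : EdgeParallel s t) :
    wedge (s 2 - s 0) (t 3 - t 1) = wedge (t 2 - t 0) (s 3 - s 1) := by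
  obtain ⟨h1, h2, h3, h4⟩ := h
  unfold wedge at *
  have e1 : s 2 - s 0 = (s 1 - s 0) + (s 2 - s 1) := by abel
  have e2 : t 3 - t 1 = (t 2 - t 1) + (t 3 - t 2) := by abel
  have e3 : t 2 - t 0 = (t 1 - t 0) + (t 2 - t 1) := by abel
  have e4 : s 3 - s 1 = (s 2 - s 1) + (s 3 - s 2) := by abel
  have e5 : s 0 - s 3 = -((s 1 - s 0) + ((s 2 - s 1) + (s 3 - s 2))) := by abel
  have e6 : t 0 - t 3 = -((t 1 - t 0) + ((t 2 - t 1) + (t 3 - t 2))) := by abel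
  rw [e5, e6] at h4
  rw [e1, e2, e3, e4]
  set a := ExteriorAlgebra.ι ℝ (s 1 - s 0) with ha
  set b := ExteriorAlgebra.ι ℝ (s 2 - s 1) with hb
  set c := ExteriorAlgebra.ι ℝ (s 3 - s 2) with hc
  set a' := ExteriorAlgebra.ι ℝ (t 1 - t 0) with ha'
  set b' := ExteriorAlgebra.ι ℝ (t 2 - t 1) with hb'
  set c' := ExteriorAlgebra.ι ℝ (t 3 - t 2) with hc'
  have swap_ba : b * a' = -(a' * b) := by
    rw [eq_neg_iff_add_eq_zero]
    have := ExteriorAlgebra.ι_add_mul_swap (R := ℝ) (s 2 - s 1) (t 1 - t 0)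
    rw [← hb, ← ha'] at this
    exact this
  have swap_ca : c * a' = -(a' * c) := by
    rw [eq_neg_iff_add_eq_zero]
    have := ExteriorAlgebra.ι_add_mul_swap (R := ℝ) (s 3 - s 2) (t 1 - t 0)
    rw [← hc, ← ha'] at this
    exact this
  have swap_cb : c * b' = -(b' * c) := by
    rw [eq_neg_iff_add_eq_zero]
    have := ExteriorAlgebra.ι_add_mul_swap (R := ℝ) (s 3 - s 2) (t 2 - t 1)
    rw [← hc, ← hb'] at this
    exact this
  have hb'b : b' * b = 0 := by
    have := ExteriorAlgebra.ι_add_mul_swap (R := ℝ) (s 2 - s 1) (t 2 - t 1)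
    rw [← hb, ← hb', h2, zero_add] at this
    exact this
  simp only [map_add, map_neg, ← ha, ← hb, ← hc, ← ha', ← hb', ← hc'] at h4 ⊢
  have h4' : a * b' + a * c' + b * a' + b * c' + c * a' + c * b' = 0 := by
    have := h4
    rw [neg_mul_neg] at this
    linear_combination (norm := noncomm_ring) this - h1 - h2 - h3
  linear_combination (norm := noncomm_ring) h4' - swap_ba - swap_ca - swap_cb - hb'b + h2
end

section
/- Let s and s* be edge-parallel planar quadrilaterals in a real vector space. Then their non-corresponding diagonals are parallel (δs_{ik} ∧ δs*_{jl} = 0 and δs*_{ik} ∧ δs_{jl} = 0) if and only if their mixed area A(s,s*) = (1/4)(δs_{ik} ∧ δs*_{jl} + δs*_{ik} ∧ δs_{jl}) vanishes. -/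
/-- The mixed area of two quadrilaterals. -/
noncomputable def mixedArea {V : Type*} [AddCommGroup V] [Module ℝ V]
    (s t : Fin 4 → V) : ExteriorAlgebra ℝ V :=
  (4 : ℝ)⁻¹ • (wedge (s 2 - s 0) (t 3 - t 1) + wedge (t 2 - t 0) (s 3 - s 1))

lemma ring_key {R : Type*} [Ring R] (x0 x1 x2 y0 y1 y2 : R)
    (h0 : x0 * y0 = 0) (h1 : x1 * y1 = 0) (h2 : x2 * y2 = 0)
    (h3 : (x0 + x1 + x2) * (y0 + y1 + y2) = 0)
    (s01 : y0 * x1 = -(x1 * y0)) (s02 : y0 * x2 = -(x2 * y0))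
    (s11 : y1 * x1 = -(x1 * y1)) (s12 : y1 * x2 = -(x2 * y1)) :
    (x0 + x1) * (y1 + y2) = (y0 + y1) * (x1 + x2) := by
  simp only [add_mul, mul_add, h0, h1, h2, s01, s02, s11, s12, neg_zero, add_zero, zero_add] at h3 ⊢
  rw [← sub_eq_zero, ← h3]
  abel

lemma diag_key {V : Type*} [AddCommGroup V] [Module ℝ V] (s t : Fin 4 → V)
    (h : EdgeParallel s t) :
    wedge (s 2 - s 0) (t 3 - t 1) = wedge (t 2 - t 0) (s 3 - s 1) := by
  obtain ⟨h0, h1, h2, h3⟩ := h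
  unfold wedge at *
  set ι := ExteriorAlgebra.ι ℝ (M := V)
  have e1 : s 2 - s 0 = (s 1 - s 0) + (s 2 - s 1) := by abel
  have e2 : t 3 - t 1 = (t 2 - t 1) + (t 3 - t 2) := by abel
  have e3 : t 2 - t 0 = (t 1 - t 0) + (t 2 - t 1) := by abel
  have e4 : s 3 - s 1 = (s 2 - s 1) + (s 3 - s 2) := by abel
  have e5 : s 0 - s 3 = -((s 1 - s 0) + (s 2 - s 1) + (s 3 - s 2)) := by abel
  have e6 : t 0 - t 3 = -((t 1 - t 0) + (t 2 - t 1) + (t 3 - t 2)) := by abel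
  rw [e5, e6] at h3
  rw [e1, e2, e3, e4]
  simp only [map_add, map_neg, neg_mul, mul_neg, neg_neg] at h3 ⊢
  refine ring_key _ _ _ _ _ _ h0 h1 h2 h3 ?_ ?_ ?_ ?_ <;>
    · rw [eq_neg_iff_add_eq_zero]
      exact ExteriorAlgebra.ι_add_mul_swap _ _

/-- For edge-parallel planar quadrilaterals, non-corresponding diagonals are
parallel if and only if the mixed area vanishes. -/
theorem stmt1 {V : Type*} [AddCommGroup V] [Module ℝ V] (s t : Fin 4 → V)
    (hs : Planar s) (ht : Planar t) (h : EdgeParallel s t) :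
    (wedge (s 2 - s 0) (t 3 - t 1) = 0 ∧ wedge (t 2 - t 0) (s 3 - s 1) = 0) ↔
      mixedArea s t = 0 := by
  have hkey := diag_key s t h
  unfold mixedArea
  constructor
  · rintro ⟨hx, hy⟩
    simp [hx, hy]
  · intro hz
    rw [← hkey] at hz ⊢
    have : wedge (s 2 - s 0) (t 3 - t 1) = 0 := by
      have h4 : ((4 : ℝ)⁻¹ * 2) • wedge (s 2 - s 0) (t 3 - t 1) = 0 := by
        rw [mul_smul, two_smul]; exact hz
      rcases smul_eq_zero.mp h4 with h' | h'
      · norm_num at h'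
      · exact h'
    exact ⟨this, this⟩
end
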